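/- arXiv:2401.06328 — 11 statements merged into one kernel-verified Lean document; each statement's English description precedes it below -/
import Mathlib

section
/- Let V be a normed real vector space with Module.finrank ℝ V = 2 which is a strictly convex space (StrictConvexSpace ℝ V). If S ⊆ V is a set of points such that for all p, q ∈ S the distance ‖p − q‖ is a (nonnegative) integer, then S is finite or S is collinear (Collinear ℝ S). -/
/-!
Integer distances separate the points of `S`, so an infinite `S` is unbounded. For non-collinear
`a, b, c ∈ S` the integers `‖p - a‖ - ‖p - b‖` and `‖p - a‖ - ‖p - c‖` are bounded by the triangle
inequality, hence constant on an unbounded `T ⊆ S`. Follow points of `T` escaping in a direction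
`u`, and write `p - a = H • u + x • s` with `s ∈ {b - a, c - a}` independent of `u`. Constancy of
`‖p - a‖ - ‖p - a - s‖` says that the strictly convex function `t ↦ ‖u + t • s‖` has one and the
same slope on the intervals `[(x - 1) / H, x / H]`, which shrink to `0`; two secants of equal slope
of a strictly convex function overlap, so `0 ≤ x ≤ 1`. The points thus stay near a ray, along
which `‖t • u + e‖ - t` decreases to a limit; this produces `p, p' ∈ T` with
`‖p' - p‖ + ‖p - a‖ < ‖p' - a‖ + 1`, an equality by integrality, and then also with `b` and `c`
in place of `a`. In a strictly convex space these equalities put `a, b, c` on the line `pp'`.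
-/

open Set Filter Topology Bornology Metric

section Affine

variable {k V P : Type*} [Field k] [AddCommGroup V] [Module k V] [AddTorsor V P]

theorem collinear_of_subset_affineSpan_pair {s : Set P} {a b : P} (h : s ⊆ line[k, a, b]) :
    Collinear k s := by
  refine (collinear_iff_exists_forall_eq_smul_vadd s).2 ⟨a, b -ᵥ a, fun c hc => ?_⟩
  obtain ⟨r, rfl⟩ := mem_affineSpan_pair_iff_exists_lineMap_eq.1 (h hc)
  exact ⟨r, AffineMap.lineMap_apply a b r⟩

theorem exists_not_collinear_triple {s : Set P} (hs : ¬Collinear k s) :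
    ∃ a ∈ s, ∃ b ∈ s, ∃ c ∈ s, ¬Collinear k {a, b, c} := by
  by_contra! h
  refine hs ?_
  rcases s.subsingleton_or_nontrivial with hsub | ⟨a, ha, b, hb, hab⟩
  · rcases hsub.eq_empty_or_singleton with rfl | ⟨a, rfl⟩
    exacts [collinear_empty k P, collinear_singleton k a]
  · exact collinear_of_subset_affineSpan_pair fun c hc =>
      (h a ha b hb c hc).mem_affineSpan_of_mem_of_ne (p₃ := c) (by simp) (by simp) (by simp) hab

theorem collinear_of_forall_wbtw [LinearOrder k] [IsStrictOrderedRing k] {s : Set P} {p p' : P}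
    (hne : p' ≠ p) (h : ∀ f ∈ s, Wbtw k p' p f) : Collinear k s :=
  collinear_of_subset_affineSpan_pair fun f hf => (h f hf).right_mem_affineSpan_of_left_ne hne

end Affine

theorem Set.Infinite.exists_infinite_fiber {α β : Type*} {s : Set α} (hs : s.Infinite)
    {f : α → β} (hf : (f '' s).Finite) : ∃ y, (s ∩ f ⁻¹' {y}).Infinite := by
  by_contra! h
  exact hs ((hf.biUnion fun y _ => h y).subset fun x hx =>
    mem_biUnion (mem_image_of_mem f hx) ⟨hx, rfl⟩)

theorem finite_Icc_inter_range_intCast (a b : ℝ) : (Icc a b ∩ range ((↑) : ℤ → ℝ)).Finite := by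
  rw [← image_preimage_eq_inter_range, Int.preimage_Icc]
  exact (finite_Icc _ _).image _

theorem Bornology.IsBounded.finite_of_pairwise_le_dist {α : Type*} [PseudoMetricSpace α]
    [ProperSpace α] {T : Set α} (hT : IsBounded T) {ε : ℝ} (hε : 0 < ε)
    (hsep : T.Pairwise fun p q => ε ≤ dist p q) : T.Finite := by
  obtain ⟨t, htf, hcov⟩ := Metric.totallyBounded_iff.1
    (hT.isCompact_closure.totallyBounded.subset subset_closure) (ε / 2) (half_pos hε)
  refine (htf.biUnion fun y _ => (?_ : (T ∩ ball y (ε / 2)).Subsingleton).finite).subset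
    fun p hp => ?_
  · rintro p ⟨hp, hpy⟩ q ⟨hq, hqy⟩
    by_contra hpq
    rw [mem_ball] at hpy hqy
    linarith [hsep hp hq hpq, dist_triangle_right p q y]
  · obtain ⟨y, hy, hpy⟩ := mem_iUnion₂.1 (hcov hp)
    exact mem_biUnion hy ⟨hp, hpy⟩

theorem StrictConvexOn.lt_of_slope_eq {𝕜 : Type*} [Field 𝕜] [LinearOrder 𝕜]
    [IsStrictOrderedRing 𝕜] {f : 𝕜 → 𝕜} (hf : StrictConvexOn 𝕜 univ f) {a b c d : 𝕜}
    (hab : a < b) (hcd : c < d) (h : slope f a b = slope f c d) : c < b := by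
  by_contra! hbc
  refine h.not_lt ?_
  calc slope f a b < slope f b d := by
        simpa only [slope_def_field] using
          hf.slope_strict_mono_adjacent trivial trivial hab (hbc.trans_lt hcd)
    _ = slope f d b := slope_comm f b d
    _ ≤ slope f d c := hf.convexOn.slope_mono trivial ⟨trivial, (hbc.trans_lt hcd).ne⟩
        ⟨trivial, hcd.ne⟩ hbc
    _ = slope f c d := slope_comm f d c

def IsIntegralDistanceSet {α : Type*} [PseudoMetricSpace α] (S : Set α) : Prop :=
  ∀ p ∈ S, ∀ q ∈ S, ∃ n : ℕ, dist p q = n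

namespace IsIntegralDistanceSet

variable {α : Type*} [MetricSpace α] {S : Set α} (hS : IsIntegralDistanceSet S)
include hS

theorem pairwise_one_le_dist : S.Pairwise fun p q => 1 ≤ dist p q := by
  intro p hp q hq hpq
  obtain ⟨n, hn⟩ := hS p hp q hq
  rw [hn, Nat.one_le_cast, Nat.one_le_iff_ne_zero]
  rintro rfl
  exact hpq (dist_eq_zero.1 (by simpa using hn))

theorem finite_image_dist_sub_dist {a b : α} (ha : a ∈ S) (hb : b ∈ S) :
    ((fun p => dist p a - dist p b) '' S).Finite := by
  refine (finite_Icc_inter_range_intCast (-dist a b) (dist a b)).subset ?_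
  rintro _ ⟨p, hp, rfl⟩
  obtain ⟨m, hm⟩ := hS p hp a ha
  obtain ⟨n, hn⟩ := hS p hp b hb
  refine ⟨abs_le.1 ?_, (m : ℤ) - n, by push_cast [hm, hn]; ring⟩
  simpa only [dist_comm p] using abs_dist_sub_le a b p

theorem exists_infinite_subset_dist_sub_dist_eq (hinf : S.Infinite) {a b c : α} (ha : a ∈ S)
    (hb : b ∈ S) (hc : c ∈ S) : ∃ T ⊆ S, T.Infinite ∧ ∃ jb jc : ℝ,
      (∀ p ∈ T, dist p a - dist p b = jb) ∧ ∀ p ∈ T, dist p a - dist p c = jc := by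
  obtain ⟨⟨jb, jc⟩, hT⟩ := hinf.exists_infinite_fiber
    (f := fun p => (dist p a - dist p b, dist p a - dist p c))
    (((hS.finite_image_dist_sub_dist ha hb).prod (hS.finite_image_dist_sub_dist ha hc)).subset
      image_prodMk_subset_prod)
  exact ⟨_, inter_subset_left, hT, jb, jc, fun p hp => congrArg Prod.fst hp.2,
    fun p hp => congrArg Prod.snd hp.2⟩

theorem dist_add_dist_eq_of_lt_add_one {p q r : α} (hp : p ∈ S) (hq : q ∈ S) (hr : r ∈ S)
    (h : dist p q + dist q r < dist p r + 1) : dist p q + dist q r = dist p r := by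
  obtain ⟨k, hk⟩ := hS p hp q hq
  obtain ⟨l, hl⟩ := hS q hq r hr
  obtain ⟨m, hm⟩ := hS p hp r hr
  have htri := dist_triangle p q r
  rw [hk, hl, hm] at h htri ⊢
  have h₁ : k + l < m + 1 := by exact_mod_cast h
  have h₂ : m ≤ k + l := by exact_mod_cast htri
  exact_mod_cast (by omega : k + l = m)

end IsIntegralDistanceSet

section NormedSpace

variable {V : Type*} [NormedAddCommGroup V] [NormedSpace ℝ V]

theorem strictConvexOn_norm_add_smul [StrictConvexSpace ℝ V] {u s : V}
    (hus : LinearIndependent ℝ ![u, s]) : StrictConvexOn ℝ univ fun t : ℝ => ‖u + t • s‖ := by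
  refine ⟨convex_univ, fun x _ y _ hxy a b ha hb hab => ?_⟩
  have hne : ∀ t : ℝ, u + t • s ≠ 0 := fun t h =>
    one_ne_zero (LinearIndependent.pair_iff.1 hus 1 t (by rwa [one_smul])).1
  have hray : ¬SameRay ℝ (u + x • s) (u + y • s) := fun hr => by
    obtain ⟨r, -, hr⟩ := hr.exists_nonneg_left (hne x)
    obtain ⟨h1, h2⟩ := LinearIndependent.pair_iff.1 hus (r - 1) (r * x - y) <| by
      rw [← sub_eq_zero.2 hr]; module
    exact hxy (by rw [sub_eq_zero.1 h1, one_mul] at h2; linarith)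
  have hray' : ¬SameRay ℝ (a • (u + x • s)) (b • (u + y • s)) := fun hr => hray <| by
    simpa [inv_smul_smul₀ ha.ne', inv_smul_smul₀ hb.ne'] using
      (hr.pos_smul_left (inv_pos.2 ha)).pos_smul_right (inv_pos.2 hb)
  calc ‖u + (a • x + b • y) • s‖ = ‖a • (u + x • s) + b • (u + y • s)‖ := by
        congr 1; linear_combination (norm := module) (-hab) • u
    _ < ‖a • (u + x • s)‖ + ‖b • (u + y • s)‖ := norm_add_lt_of_not_sameRay hray'
    _ = a • ‖u + x • s‖ + b • ‖u + y • s‖ := by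
        rw [norm_smul, norm_smul, Real.norm_of_nonneg ha.le, Real.norm_of_nonneg hb.le]; rfl

theorem eventually_mem_Icc_of_norm_sub_norm_sub_eq [StrictConvexSpace ℝ V] {u s : V}
    (hus : LinearIndependent ℝ ![u, s]) {q : ℕ → V} {H x : ℕ → ℝ}
    (hq : ∀ l, q l = H l • u + x l • s) (hH : Tendsto H atTop atTop)
    (hx : Tendsto (fun l => x l / H l) atTop (𝓝 0)) {j : ℝ} (hj : ∀ l, ‖q l‖ - ‖q l - s‖ = j) :
    ∀ᶠ l in atTop, x l ∈ Icc 0 1 := by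
  set f : ℝ → ℝ := fun t => ‖u + t • s‖
  have hf : StrictConvexOn ℝ univ f := strictConvexOn_norm_add_smul hus
  have hα : Tendsto (fun l => (x l - 1) / H l) atTop (𝓝 0) := by
    simpa only [sub_div, one_div, sub_zero, Pi.inv_apply] using hx.sub hH.inv_tendsto_atTop
  -- As `‖H • u + y • s‖ = H * f (y / H)`, the constraint is a slope of `f`.
  have hslope : ∀ᶠ l in atTop, 0 < H l ∧ slope f ((x l - 1) / H l) (x l / H l) = j := by
    filter_upwards [hH.eventually_gt_atTop 0] with l hl
    have hscale : ∀ y : ℝ, ‖H l • u + y • s‖ = H l * f (y / H l) := fun y => by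
      rw [show H l • u + y • s = H l • (u + (y / H l) • s) by
        rw [smul_add, smul_smul, mul_div_cancel₀ _ hl.ne'], norm_smul, Real.norm_of_nonneg hl.le]
    refine ⟨hl, ?_⟩
    rw [← hj l, hq l, show H l • u + x l • s - s = H l • u + (x l - 1) • s by module,
      hscale, hscale, slope_def_field]
    field_simp
    ring
  have hlt : ∀ l, 0 < H l → (x l - 1) / H l < x l / H l := fun l hl =>
    div_lt_div_of_pos_right (by linarith) hl
  filter_upwards [hslope] with l ⟨hl, hjl⟩
  have h₀ : 0 ≤ x l / H l := le_of_tendsto hα <| hslope.mono fun m ⟨hm, hjm⟩ =>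
    (hf.lt_of_slope_eq (hlt l hl) (hlt m hm) (hjl.trans hjm.symm)).le
  have h₁ : (x l - 1) / H l ≤ 0 := ge_of_tendsto hx <| hslope.mono fun m ⟨hm, hjm⟩ =>
    (hf.lt_of_slope_eq (hlt m hm) (hlt l hl) (hjm.trans hjl.symm)).le
  rw [le_div_iff₀ hl, zero_mul] at h₀
  rw [div_le_iff₀ hl, zero_mul] at h₁
  exact ⟨h₀, by linarith⟩

theorem exists_norm_sub_add_norm_lt_of_tendsto_sub_smul {u e : V} (hu : ‖u‖ = 1)
    {H : ℕ → ℝ} {q : ℕ → V} (hH : Tendsto H atTop atTop)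
    (hq : Tendsto (fun l => q l - H l • u) atTop (𝓝 e)) {ε : ℝ} (hε : 0 < ε) :
    ∃ n m, H n < H m ∧ ‖q m - q n‖ + ‖q n‖ < ‖q m‖ + ε := by
  set G : ℝ → ℝ := fun t => ‖t • u + e‖ - t
  have hG_anti : Antitone G := fun t t' htt' => by
    have h := norm_add_le (t • u + e) ((t' - t) • u)
    rw [norm_smul, hu, mul_one, Real.norm_of_nonneg (sub_nonneg.2 htt'),
      show t • u + e + (t' - t) • u = t' • u + e by module] at h
    simp only [G]; linarith
  have hG_bdd : BddBelow (range G) := ⟨-‖e‖, by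
    rintro _ ⟨t, rfl⟩
    have h := norm_sub_le (t • u + e) e
    rw [add_sub_cancel_right, norm_smul, hu, mul_one, Real.norm_eq_abs] at h
    simp only [G]; linarith [le_abs_self t]⟩
  -- The defect of the triangle `0, q n, q m` is at most `G (H n) - G (H m)` up to the errors
  -- `‖q l - H l • u - e‖`, and `G` converges at infinity.
  set L := ⨅ t, G t
  have hGH : ∀ᶠ l in atTop, G (H l) < L + ε / 5 :=
    ((tendsto_atTop_ciInf hG_anti hG_bdd).comp hH).eventually (gt_mem_nhds (by linarith))
  have hclose : ∀ᶠ l in atTop, ‖q l - H l • u - e‖ < ε / 5 := by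
    simpa only [dist_eq_norm] using hq.eventually (ball_mem_nhds e (by linarith : 0 < ε / 5))
  obtain ⟨n, hn, hGn⟩ := (hclose.and hGH).exists
  obtain ⟨m, hm, hnm⟩ := (hclose.and (hH.eventually_gt_atTop (H n))).exists
  refine ⟨n, m, hnm, ?_⟩
  have hL : L ≤ G (H m) := ciInf_le hG_bdd _
  have h₁ : ‖q m - q n‖ ≤ (H m - H n) + ‖q m - H m • u - e‖ + ‖q n - H n • u - e‖ := by
    calc ‖q m - q n‖ = ‖(H m - H n) • u + (q m - H m • u - e) - (q n - H n • u - e)‖ := by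
          congr 1; module
      _ ≤ ‖(H m - H n) • u‖ + ‖q m - H m • u - e‖ + ‖q n - H n • u - e‖ :=
          norm_sub_le_of_le (norm_add_le _ _) le_rfl
      _ = _ := by rw [norm_smul, hu, mul_one, Real.norm_of_nonneg (by linarith)]
  have h₂ : ‖q n‖ ≤ ‖H n • u + e‖ + ‖q n - H n • u - e‖ := by
    simpa using norm_add_le (H n • u + e) (q n - H n • u - e)
  have h₃ : ‖H m • u + e‖ ≤ ‖q m‖ + ‖q m - H m • u - e‖ := by
    have h := norm_sub_le (q m) (q m - H m • u - e)
    rwa [show q m - (q m - H m • u - e) = H m • u + e by abel] at h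
  simp only [G] at hGn hL
  linarith

theorem exists_norm_sub_add_norm_lt_of_norm_sub_norm_sub_eq [StrictConvexSpace ℝ V] {u s : V}
    (hus : LinearIndependent ℝ ![u, s]) (hu : ‖u‖ = 1) {q : ℕ → V} {H x : ℕ → ℝ}
    (hq : ∀ l, q l = H l • u + x l • s) (hH : Tendsto H atTop atTop)
    (hx : Tendsto (fun l => x l / H l) atTop (𝓝 0)) {j : ℝ} (hj : ∀ l, ‖q l‖ - ‖q l - s‖ = j)
    {ε : ℝ} (hε : 0 < ε) : ∃ n m, H n < H m ∧ ‖q m - q n‖ + ‖q n‖ < ‖q m‖ + ε := by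
  obtain ⟨x₀, -, φ, hφ, hxφ⟩ := isCompact_Icc.tendsto_subseq'
    (eventually_mem_Icc_of_norm_sub_norm_sub_eq hus hq hH hx hj).frequently
  obtain ⟨n, m, hnm, hlt⟩ := exists_norm_sub_add_norm_lt_of_tendsto_sub_smul hu
    (q := q ∘ φ) (e := x₀ • s) (hH.comp hφ.tendsto_atTop)
    (by simpa [hq] using hxφ.smul_const s) hε
  exact ⟨φ n, φ m, hnm, hlt⟩

theorem exists_subseq_tendsto_direction [ProperSpace V] {q : ℕ → V}
    (hq : Tendsto (fun l => ‖q l‖) atTop atTop) :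
    ∃ u : V, ‖u‖ = 1 ∧ ∃ φ : ℕ → ℕ, StrictMono φ ∧
      Tendsto (fun l => ‖q (φ l)‖⁻¹ • q (φ l)) atTop (𝓝 u) := by
  have hsphere : ∀ᶠ l in atTop, ‖q l‖⁻¹ • q l ∈ sphere (0 : V) 1 :=
    (hq.eventually_gt_atTop 0).mono fun l hl => by simp [norm_smul, hl.ne']
  obtain ⟨u, hu, φ, hφ, hlim⟩ := (isCompact_sphere (0 : V) 1).tendsto_subseq' hsphere.frequently
  exact ⟨u, mem_sphere_zero_iff_norm.1 hu, φ, hφ, hlim⟩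

section Direction

variable {u : V} {q : ℕ → V} (hq : Tendsto (fun l => ‖q l‖) atTop atTop)
  (hdir : Tendsto (fun l => ‖q l‖⁻¹ • q l) atTop (𝓝 u))
include hq hdir

theorem tendsto_atTop_of_tendsto_direction {χ : V →L[ℝ] ℝ} (hχ : χ u = 1) :
    Tendsto (fun l => χ (q l)) atTop atTop := by
  have h : Tendsto (fun l => χ (‖q l‖⁻¹ • q l)) atTop (𝓝 1) :=
    hχ ▸ (χ.continuous.tendsto u).comp hdir
  refine (hq.atTop_mul_pos one_pos h).congr' ?_
  filter_upwards [hq.eventually_gt_atTop 0] with l hl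
  rw [map_smul, smul_eq_mul, mul_inv_cancel_left₀ hl.ne']

theorem tendsto_div_of_tendsto_direction {χ ψ : V →L[ℝ] ℝ} (hχ : χ u = 1) (hψ : ψ u = 0) :
    Tendsto (fun l => ψ (q l) / χ (q l)) atTop (𝓝 0) := by
  have h := ((ψ.continuous.tendsto u).comp hdir).div ((χ.continuous.tendsto u).comp hdir)
    (by simp [hχ])
  rw [hψ, zero_div] at h
  refine h.congr' ?_
  filter_upwards [hq.eventually_gt_atTop 0] with l hl
  simp only [Pi.div_apply, Function.comp_apply, map_smul, smul_eq_mul]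
  exact mul_div_mul_left _ _ (inv_ne_zero hl.ne')

end Direction

theorem exists_coord_functionals (hdim : Module.finrank ℝ V = 2) {u s : V}
    (hus : LinearIndependent ℝ ![u, s]) :
    ∃ χ ψ : V →L[ℝ] ℝ, χ u = 1 ∧ ψ u = 0 ∧ ∀ y, y = χ y • u + ψ y • s := by
  have := FiniteDimensional.of_finrank_eq_succ hdim
  have hcard : Fintype.card (Fin 2) = Module.finrank ℝ V := by rw [Fintype.card_fin, hdim]
  set B := basisOfLinearIndependentOfCardEqFinrank hus hcard
  have hB : ⇑B = ![u, s] := coe_basisOfLinearIndependentOfCardEqFinrank hus hcard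
  have hB0 : B 0 = u := by simp [hB]
  refine ⟨LinearMap.toContinuousLinearMap (B.coord 0),
    LinearMap.toContinuousLinearMap (B.coord 1), by simp [← hB0], by simp [← hB0], fun y => ?_⟩
  have h := B.sum_repr y
  rw [Fin.sum_univ_two, hB] at h
  simpa using h.symm

theorem exists_linearIndependent_sub_of_not_collinear {a b c u : V} (hu : u ≠ 0)
    (habc : ¬Collinear ℝ {a, b, c}) :
    ∃ f ∈ ({b, c} : Set V), LinearIndependent ℝ ![u, f - a] := by
  by_contra! hdep
  simp only [LinearIndependent.pair_iff' hu, not_forall, not_not] at hdep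
  refine habc ((collinear_iff_of_mem (p₀ := a) (by simp)).2 ⟨u, ?_⟩)
  simp only [mem_insert_iff, mem_singleton_iff]
  rintro p (rfl | rfl | rfl)
  · exact ⟨0, by simp⟩
  all_goals
    obtain ⟨r, hr⟩ := hdep p (by simp)
    exact ⟨r, by rw [hr, vadd_eq_add, sub_add_cancel]⟩

theorem exists_dist_add_dist_lt [StrictConvexSpace ℝ V] (hdim : Module.finrank ℝ V = 2)
    {T : Set V} (hT : ¬IsBounded T) {a b c : V} (habc : ¬Collinear ℝ {a, b, c}) {jb jc : ℝ}
    (hb : ∀ p ∈ T, dist p a - dist p b = jb) (hc : ∀ p ∈ T, dist p a - dist p c = jc)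
    {ε : ℝ} (hε : 0 < ε) :
    ∃ p ∈ T, ∃ p' ∈ T, p ≠ p' ∧ dist p' p + dist p a < dist p' a + ε := by
  have := FiniteDimensional.of_finrank_eq_succ hdim
  have hfar : ∀ l : ℕ, ∃ p ∈ T, (l : ℝ) < ‖p - a‖ := fun l => by
    by_contra! h
    exact hT ((isBounded_closedBall (x := a) (r := l)).subset fun p hp => by
      simpa [dist_eq_norm] using h p hp)
  choose p hpT hpa using hfar
  have hp : Tendsto (fun l => ‖p l - a‖) atTop atTop :=
    tendsto_atTop_mono (fun l => (hpa l).le) tendsto_natCast_atTop_atTop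
  obtain ⟨u, hu, φ, hφ, hdir⟩ := exists_subseq_tendsto_direction hp
  obtain ⟨f, hf, hus⟩ := exists_linearIndependent_sub_of_not_collinear
    (norm_ne_zero_iff.1 (by rw [hu]; exact one_ne_zero)) habc
  obtain ⟨j, hj⟩ : ∃ j, ∀ p ∈ T, dist p a - dist p f = j := by
    rcases hf with rfl | rfl
    exacts [⟨jb, hb⟩, ⟨jc, hc⟩]
  obtain ⟨χ, ψ, hχ, hψ, hrepr⟩ := exists_coord_functionals hdim hus
  have hq := hp.comp hφ.tendsto_atTop
  obtain ⟨n, m, hnm, hlt⟩ := exists_norm_sub_add_norm_lt_of_norm_sub_norm_sub_eq hus hu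
    (q := fun l => p (φ l) - a) (fun l => hrepr _) (tendsto_atTop_of_tendsto_direction hq hdir hχ)
    (tendsto_div_of_tendsto_direction hq hdir hχ hψ) (j := j)
    (fun l => by simpa [dist_eq_norm, sub_sub_sub_cancel_right] using hj _ (hpT (φ l))) hε
  refine ⟨p (φ n), hpT _, p (φ m), hpT _, fun h => hnm.ne (by simp [h]), ?_⟩
  simpa [dist_eq_norm] using hlt

end NormedSpace

/-- Erdős–Anning theorem for 2-dimensional strictly convex distance functions:
a set with pairwise integer distances is finite or collinear. -/
theorem erdos_anning_strictly_convex
    {V : Type*} [NormedAddCommGroup V] [NormedSpace ℝ V]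
    (hdim : Module.finrank ℝ V = 2) [StrictConvexSpace ℝ V]
    (S : Set V) (hS : ∀ p ∈ S, ∀ q ∈ S, ∃ n : ℕ, ‖p - q‖ = n) :
    S.Finite ∨ Collinear ℝ S := by
  refine or_iff_not_imp_left.2 fun hinf => by_contra fun hcol => ?_
  have hS' : IsIntegralDistanceSet S := fun p hp q hq => by
    simpa only [dist_eq_norm] using hS p hp q hq
  have := FiniteDimensional.of_finrank_eq_succ hdim
  obtain ⟨a, ha, b, hb, c, hc, habc⟩ := exists_not_collinear_triple hcol
  obtain ⟨T, hTS, hTinf, jb, jc, hTb, hTc⟩ :=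
    hS'.exists_infinite_subset_dist_sub_dist_eq hinf ha hb hc
  have hT : ¬IsBounded T := fun hbdd =>
    hTinf (hbdd.finite_of_pairwise_le_dist one_pos (hS'.pairwise_one_le_dist.mono hTS))
  obtain ⟨p, hp, p', hp', hne, hlt⟩ := exists_dist_add_dist_lt hdim hT habc hTb hTc one_pos
  have hpa := hS'.dist_add_dist_eq_of_lt_add_one (hTS hp') (hTS hp) ha hlt
  refine habc (collinear_of_forall_wbtw hne.symm fun f hf => dist_add_dist_eq_iff.1 ?_)
  rcases hf with rfl | rfl | rfl
  · exact hpa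
  · linarith [hTb p hp, hTb p' hp']
  · linarith [hTc p hp, hTc p' hp']
end

section
/- Every additively weighted Voronoi cell is star-shaped with its site in its kernel: for every index i and every p ∈ Vor i, the closed segment from s i to p is contained in Vor i; equivalently, StarConvex ℝ (s i) (Vor i) holds, and in particular s i ∈ Vor i whenever Vor i is nonempty. -/
/-- The additively weighted Voronoi cell of the site `s i` with weights `w`:
the set of points whose weighted distance to `s i` is at most the weighted
distance to every other site. -/
def vorCell {V : Type*} [NormedAddCommGroup V] {ι : Type*}
    (s : ι → V) (w : ι → ℝ) (i : ι) : Set V :=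
  {p : V | ∀ j, ‖p - s i‖ + w i ≤ ‖p - s j‖ + w j}

/-- A site `s i` is degenerate if it belongs to the Voronoi cell of another site. -/
def IsDegenerateSite {V : Type*} [NormedAddCommGroup V] {ι : Type*}
    (s : ι → V) (w : ι → ℝ) (i : ι) : Prop :=
  ∃ j, j ≠ i ∧ s i ∈ vorCell s w j

/-- Every non-empty additively weighted Voronoi cell is star-shaped with its site
in its kernel: the segment from the site to any point of the cell stays in the cell,
`StarConvex ℝ (s i) (vorCell s w i)` holds, and the site belongs to its own cell
whenever the cell is nonempty. -/
theorem vorCell_starShaped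
    {V : Type*} [NormedAddCommGroup V] [NormedSpace ℝ V]
    (hdim : Module.finrank ℝ V = 2) [StrictConvexSpace ℝ V]
    {ι : Type*} [Finite ι] (s : ι → V) (hs : Function.Injective s) (w : ι → ℝ)
    (i : ι) :
    (∀ p ∈ vorCell s w i, segment ℝ (s i) p ⊆ vorCell s w i) ∧
      StarConvex ℝ (s i) (vorCell s w i) ∧
      ((vorCell s w i).Nonempty → s i ∈ vorCell s w i) := by
  have key : ∀ p ∈ vorCell s w i, segment ℝ (s i) p ⊆ vorCell s w i := by
    rintro p hp q ⟨a, b, ha, hb, hab, rfl⟩ j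
    have h1 : a • s i + b • p - s i = b • (p - s i) := by
      have : a = 1 - b := by linarith
      subst this; module
    have h2 : p - (a • s i + b • p) = a • (p - s i) := by
      have : a = 1 - b := by linarith
      subst this; module
    have hn1 : ‖a • s i + b • p - s i‖ = b * ‖p - s i‖ := by
      rw [h1, norm_smul, Real.norm_of_nonneg hb]
    have hn2 : ‖p - (a • s i + b • p)‖ = a * ‖p - s i‖ := by
      rw [h2, norm_smul, Real.norm_of_nonneg ha]
    have htri : ‖p - s j‖ ≤ ‖p - (a • s i + b • p)‖ + ‖a • s i + b • p - s j‖ := by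
      simpa [dist_eq_norm] using dist_triangle p (a • s i + b • p) (s j)
    have hp' := hp j
    have hab' : b * ‖p - s i‖ + a * ‖p - s i‖ = ‖p - s i‖ := by
      have : (b + a) * ‖p - s i‖ = ‖p - s i‖ := by rw [show b + a = 1 by linarith, one_mul]
      linarith [this]
    rw [hn1]
    rw [hn2] at htri
    linarith
  refine ⟨key, ?_, ?_⟩
  · intro p hp a b ha hb hab
    exact key p hp ⟨a, b, ha, hb, hab, rfl⟩
  · rintro ⟨p, hp⟩
    exact key p hp (left_mem_segment ℝ (s i) p)
end

section
/- Let i ≠ j be indices such that s i is degenerate because s i ∈ Vor j, and let R = {s i + t • (s i − s j) | t : ℝ, t ≥ 0} be the ray with initial point s i on the line through s i and s j, extending away from s j. Then either Vor i = ∅ or Vor i = R ∩ Vor j. -/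
/-- If `s i` is degenerate, lying in the cell of `s j`, then its cell is either empty
or equal to the intersection of the cell of `s j` with the ray from `s i` directed
away from `s j`. -/
theorem vorCell_of_degenerate_eq_ray_inter
    {V : Type*} [NormedAddCommGroup V] [NormedSpace ℝ V]
    (hdim : Module.finrank ℝ V = 2) [StrictConvexSpace ℝ V]
    {ι : Type*} [Finite ι] (s : ι → V) (hs : Function.Injective s) (w : ι → ℝ)
    (i j : ι) (hij : i ≠ j) (hdeg : s i ∈ vorCell s w j)
    (R : Set V) (hR : R = {x : V | ∃ t : ℝ, 0 ≤ t ∧ x = s i + t • (s i - s j)}) :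
    vorCell s w i = ∅ ∨ vorCell s w i = R ∩ vorCell s w j := by
  rcases Set.eq_empty_or_nonempty (vorCell s w i) with h | ⟨q, hq⟩
  · exact Or.inl h
  right
  have hne : s i - s j ≠ 0 := sub_ne_zero.mpr (fun h => hij (hs h))
  -- from degeneracy: ‖s i - s j‖ + w j ≤ w i
  have hd : ‖s i - s j‖ + w j ≤ w i := by
    have := hdeg i
    simpa using this
  -- from nonemptiness: w i = ‖s i - s j‖ + w j
  have hw : w i = ‖s i - s j‖ + w j := by
    have h1 : ‖q - s i‖ + w i ≤ ‖q - s j‖ + w j := hq j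
    have h2 : ‖q - s j‖ ≤ ‖q - s i‖ + ‖s i - s j‖ := by
      simpa using norm_add_le (q - s i) (s i - s j)
    linarith
  ext p
  constructor
  · intro hp
    have h1 : ‖p - s i‖ + w i ≤ ‖p - s j‖ + w j := hp j
    have h2 : ‖p - s j‖ ≤ ‖p - s i‖ + ‖s i - s j‖ := by
      simpa using norm_add_le (p - s i) (s i - s j)
    have heq : ‖(p - s i) + (s i - s j)‖ = ‖p - s i‖ + ‖s i - s j‖ := by
      have : (p - s i) + (s i - s j) = p - s j := by abel
      rw [this]; linarith
    have hray : SameRay ℝ (p - s i) (s i - s j) := sameRay_iff_norm_add.mpr heq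
    obtain ⟨t, ht, hts⟩ := hray.exists_nonneg_right hne
    constructor
    · rw [hR]
      exact ⟨t, ht, by rw [← hts]; abel⟩
    · intro k
      have hk := hp k
      have : ‖p - s j‖ = ‖p - s i‖ + ‖s i - s j‖ := by linarith
      rw [this]
      linarith [hp k]
  · rintro ⟨hpR, hpj⟩
    rw [hR] at hpR
    obtain ⟨t, ht, rfl⟩ := hpR
    intro k
    have h1 : s i + t • (s i - s j) - s i = t • (s i - s j) := by abel
    have h2 : s i + t • (s i - s j) - s j = (1 + t) • (s i - s j) := by
      rw [add_smul, one_smul]; abel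
    have hn1 : ‖s i + t • (s i - s j) - s i‖ = t * ‖s i - s j‖ := by
      rw [h1, norm_smul, Real.norm_eq_abs, abs_of_nonneg ht]
    have hn2 : ‖s i + t • (s i - s j) - s j‖ = (1 + t) * ‖s i - s j‖ := by
      rw [h2, norm_smul, Real.norm_eq_abs, abs_of_nonneg (by linarith)]
    have hk := hpj k
    rw [hn2] at hk
    rw [hn1]
    nlinarith [norm_nonneg (s i - s j)]
end

section
/- Assume the index type ι is nonempty. Then every point of the space belongs to the Voronoi cell of at least one non-degenerate site: for every p ∈ V there exists an index i such that s i is non-degenerate and p ∈ Vor i. -/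
/-- Every point of the space belongs to the Voronoi cell of at least one
non-degenerate site. -/
theorem exists_nondegenerate_vorCell_mem
    {V : Type*} [NormedAddCommGroup V] [NormedSpace ℝ V]
    (hdim : Module.finrank ℝ V = 2) [StrictConvexSpace ℝ V]
    {ι : Type*} [Finite ι] [Nonempty ι]
    (s : ι → V) (hs : Function.Injective s) (w : ι → ℝ) (p : V) :
    ∃ i : ι, ¬ IsDegenerateSite s w i ∧ p ∈ vorCell s w i := by
  classical
  cases nonempty_fintype ι
  set f : ι → ℝ := fun i => ‖p - s i‖ + w i with hf
  obtain ⟨i₀, hi₀⟩ := Finite.exists_min f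
  let T : Finset ι := Finset.univ.filter (fun i => ∀ k, f i ≤ f k)
  have hT : T.Nonempty := ⟨i₀, by simp [T, hi₀]⟩
  obtain ⟨i, hiT, hi⟩ := T.exists_min_image w hT
  have hiT' : ∀ k, f i ≤ f k := by simpa [T] using hiT
  refine ⟨i, ?_, hiT'⟩
  rintro ⟨j, hji, hj⟩
  have h1 : ‖s i - s j‖ + w j ≤ w i := by simpa using hj i
  have hjmin : ∀ k, f j ≤ f k := by
    intro k
    have htri : ‖p - s j‖ ≤ ‖p - s i‖ + ‖s i - s j‖ := by
      simpa using norm_add_le (p - s i) (s i - s j)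
    have : f j ≤ f i := by
      simp only [hf]
      linarith
    exact this.trans (hiT' k)
  have hjT : j ∈ T := by simp [T, hjmin]
  have hwij : w i ≤ w j := hi j hjT
  have hpos : 0 < ‖s i - s j‖ := by
    rw [norm_pos_iff, sub_ne_zero]
    exact fun h => hji (hs h).symm
  linarith
end

section
/- A site s i is non-degenerate if and only if s i is an interior point of its own cell, i.e., s i ∈ interior (Vor i). -/
open Filter Topology

section

variable {V : Type*} [NormedAddCommGroup V] {ι : Type*} {s : ι → V} {w : ι → ℝ} {i : ι}

theorem not_isDegenerateSite_iff_forall_lt [Finite ι] :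
    ¬ IsDegenerateSite s w i ↔ ∀ j, j ≠ i → w i < ‖s i - s j‖ + w j := by
  constructor
  · intro hnd j hj
    by_contra! hle
    have : Nonempty ι := ⟨i⟩
    obtain ⟨k, hk⟩ := Finite.exists_min fun k => ‖s i - s k‖ + w k
    by_cases hki : k = i
    · subst hki
      exact hnd ⟨j, hj, fun l => hle.trans (by simpa using hk l)⟩
    · exact hnd ⟨k, hki, hk⟩
  · rintro hlt ⟨j, hj, hmem⟩
    exact (hlt j hj).not_ge (by simpa using hmem i)

theorem mem_interior_vorCell_of_forall_lt [Finite ι]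
    (hlt : ∀ j, j ≠ i → w i < ‖s i - s j‖ + w j) :
    s i ∈ interior (vorCell s w i) := by
  rw [mem_interior_iff_mem_nhds, vorCell, Set.ofPred_forall, iInter_mem]
  intro j
  by_cases hj : j = i
  · subst hj
    exact Eventually.of_forall fun _ => le_rfl
  · have hlt_at : ‖s i - s i‖ + w i < ‖s i - s j‖ + w j := by simpa using hlt j hj
    exact (ContinuousAt.eventually_lt (by fun_prop) (by fun_prop) hlt_at).mono fun _ => le_of_lt

theorem lt_of_mem_interior_vorCell [NormedSpace ℝ V] (hint : s i ∈ interior (vorCell s w i))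
    {j : ι} (hji : s j ≠ s i) : w i < ‖s i - s j‖ + w j := by
  have hline : Tendsto (AffineMap.lineMap (s i) (s j) : ℝ → V) (𝓝[>] 0) (𝓝 (s i)) :=
    ((AffineMap.lineMap_continuous).tendsto' 0 (s i) (by simp)).mono_left nhdsWithin_le_nhds
  obtain ⟨θ, hcell, hθ0, hθ1⟩ :=
    ((hline.eventually (mem_interior_iff_mem_nhds.mp hint)).and (Ioo_mem_nhdsGT one_pos)).exists
  have hdist_i : ‖AffineMap.lineMap (s i) (s j) θ - s i‖ = θ * ‖s i - s j‖ := by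
    rw [← dist_eq_norm, dist_comm, dist_left_lineMap, Real.norm_of_nonneg hθ0.le, dist_eq_norm]
  have hdist_j : ‖AffineMap.lineMap (s i) (s j) θ - s j‖ = (1 - θ) * ‖s i - s j‖ := by
    rw [← dist_eq_norm, dist_lineMap_right, Real.norm_of_nonneg (sub_nonneg.2 hθ1.le),
      dist_eq_norm]
  have hd : 0 < ‖s i - s j‖ := norm_pos_iff.2 (sub_ne_zero.2 hji.symm)
  have hcell_j := hcell j
  rw [hdist_i, hdist_j] at hcell_j
  nlinarith

end

theorem nondegenerate_iff_mem_interior_vorCell_general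
    {V : Type*} [NormedAddCommGroup V] [NormedSpace ℝ V]
    {ι : Type*} [Finite ι]
    (s : ι → V) (hs : Function.Injective s) (w : ι → ℝ) (i : ι) :
    ¬ IsDegenerateSite s w i ↔ s i ∈ interior (vorCell s w i) := by
  rw [not_isDegenerateSite_iff_forall_lt]
  exact ⟨mem_interior_vorCell_of_forall_lt,
    fun hint j hj => lt_of_mem_interior_vorCell hint (hs.ne hj)⟩

/-- A site is non-degenerate if and only if it is an interior point of its own
Voronoi cell. -/
theorem nondegenerate_iff_mem_interior_vorCell
    {V : Type*} [NormedAddCommGroup V] [NormedSpace ℝ V]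
    (hdim : Module.finrank ℝ V = 2) [StrictConvexSpace ℝ V]
    {ι : Type*} [Finite ι]
    (s : ι → V) (hs : Function.Injective s) (w : ι → ℝ) (i : ι) :
    ¬ IsDegenerateSite s w i ↔ s i ∈ interior (vorCell s w i) :=
  nondegenerate_iff_mem_interior_vorCell_general s hs w i
end

section
/- Let i be an index whose site s i is non-degenerate, let p ∈ Vor i, and let q belong to the open segment openSegment ℝ (s i) p (the relative interior of the segment from s i to p). Then q ∈ interior (Vor i). -/
/-- If `s i` is non-degenerate, `p` lies in its cell, and `q` lies in the relative
interior of the segment from `s i` to `p`, then `q` is interior to the cell. -/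
theorem openSegment_subset_interior_vorCell
    {V : Type*} [NormedAddCommGroup V] [NormedSpace ℝ V]
    (hdim : Module.finrank ℝ V = 2) [StrictConvexSpace ℝ V]
    {ι : Type*} [Finite ι]
    (s : ι → V) (hs : Function.Injective s) (w : ι → ℝ) (i : ι)
    (hnd : ¬ IsDegenerateSite s w i)
    (p : V) (hp : p ∈ vorCell s w i)
    (q : V) (hq : q ∈ openSegment ℝ (s i) p) :
    q ∈ interior (vorCell s w i) := by
  classical
  have hne : Nonempty ι := ⟨i⟩
  -- Step 1: `s i` lies in its own cell, since a minimizer's cell contains `s i`.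
  obtain ⟨k, hk⟩ := Finite.exists_min (fun j => ‖s i - s j‖ + w j)
  have hki : k = i := by
    by_contra h
    exact hnd ⟨k, h, fun m => hk m⟩
  rw [hki] at hk
  have hsi : ∀ j, w i ≤ ‖s i - s j‖ + w j := by
    intro j
    have := hk j
    simpa using this
  -- Step 2: strict inequality for `j ≠ i` by non-degeneracy.
  have hstrict : ∀ j, j ≠ i → w i < ‖s i - s j‖ + w j := by
    intro j hj
    rcases (hsi j).lt_or_eq with h | h
    · exact h
    · exact absurd ⟨j, hj, fun m => by rw [← h]; exact hsi m⟩ hnd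
  -- The open set we will use.
  have hUopen : IsOpen {x : V | ∀ j, w i + ‖s i - s j‖ ≤ w j ∨
      ‖x - s i‖ + w i < ‖x - s j‖ + w j} := by
    have hrw : {x : V | ∀ j, w i + ‖s i - s j‖ ≤ w j ∨ ‖x - s i‖ + w i < ‖x - s j‖ + w j}
        = ⋂ j, {x : V | w i + ‖s i - s j‖ ≤ w j ∨ ‖x - s i‖ + w i < ‖x - s j‖ + w j} := by
      ext x; simp
    rw [hrw]
    refine isOpen_iInter_of_finite fun j => ?_
    by_cases hcase : w i + ‖s i - s j‖ ≤ w j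
    · simp [hcase]
    · have he : {x : V | w i + ‖s i - s j‖ ≤ w j ∨ ‖x - s i‖ + w i < ‖x - s j‖ + w j}
          = {x : V | ‖x - s i‖ + w i < ‖x - s j‖ + w j} := by
        ext x; simp [hcase]
      rw [he]
      exact isOpen_lt (by fun_prop) (by fun_prop)
  have hUsub : {x : V | ∀ j, w i + ‖s i - s j‖ ≤ w j ∨
      ‖x - s i‖ + w i < ‖x - s j‖ + w j} ⊆ vorCell s w i := by
    intro x hx j
    rcases hx j with h | h
    · have t1 : ‖x - s i‖ ≤ ‖x - s j‖ + ‖s j - s i‖ := by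
        have h1 : x - s i = (x - s j) + (s j - s i) := by abel
        calc ‖x - s i‖ = ‖(x - s j) + (s j - s i)‖ := by rw [← h1]
          _ ≤ ‖x - s j‖ + ‖s j - s i‖ := norm_add_le _ _
      have t2 : ‖s j - s i‖ = ‖s i - s j‖ := norm_sub_rev _ _
      linarith
    · exact h.le
  -- Decompose q.
  obtain ⟨ta, tb, hta, htb, hab, rfl⟩ := hq
  have hta' : ta = 1 - tb := by linarith
  subst hta'
  set q := (1 - tb) • s i + tb • p with hqdef
  have hqs : q - s i = tb • (p - s i) := by rw [hqdef]; module
  have hpq : p - q = (1 - tb) • (p - s i) := by rw [hqdef]; module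
  have hnq : ‖q - s i‖ = tb * ‖p - s i‖ := by
    rw [hqs, norm_smul, Real.norm_of_nonneg htb.le]
  have hnpq : ‖p - q‖ = (1 - tb) * ‖p - s i‖ := by
    rw [hpq, norm_smul, Real.norm_of_nonneg hta.le]
  have hsum : ‖q - s i‖ + ‖p - q‖ = ‖p - s i‖ := by
    rw [hnq, hnpq]; ring
  refine interior_maximal hUsub hUopen ?_
  simp only [Set.mem_setOf_eq]
  intro j
  by_cases hj : w i + ‖s i - s j‖ ≤ w j
  · exact Or.inl hj
  right
  have hji : j ≠ i := by
    rintro rfl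
    simp at hj
  by_contra hge
  push_neg at hge
  have hpj := hp j
  have htri : ‖p - s j‖ ≤ ‖q - s j‖ + ‖p - q‖ := by
    have h1 : p - s j = (q - s j) + (p - q) := by abel
    calc ‖p - s j‖ = ‖(q - s j) + (p - q)‖ := by rw [← h1]
      _ ≤ ‖q - s j‖ + ‖p - q‖ := norm_add_le _ _
  by_cases hp0 : p = s i
  · have hq0 : q = s i := by rw [hqdef, hp0]; module
    rw [hq0] at hge
    simp only [sub_self, norm_zero, zero_add] at hge
    linarith [hstrict j hji]
  · have hpsi : p - s i ≠ 0 := sub_ne_zero.mpr hp0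
    have hpqne : p - q ≠ 0 := by
      rw [hpq]; exact smul_ne_zero (ne_of_gt hta) hpsi
    have hqsne : q - s i ≠ 0 := by
      rw [hqs]; exact smul_ne_zero (ne_of_gt htb) hpsi
    have heqtri : ‖p - s j‖ = ‖q - s j‖ + ‖p - q‖ := le_antisymm htri (by linarith)
    have hray1 : SameRay ℝ (q - s j) (p - q) := by
      rw [sameRay_iff_norm_add]
      have h1 : (q - s j) + (p - q) = p - s j := by abel
      rw [h1, heqtri]
    have hray2 : SameRay ℝ (p - q) (q - s i) := by
      rw [hpq, hqs]
      exact ((SameRay.refl (p - s i)).nonneg_smul_left hta.le).nonneg_smul_right htb.le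
    have hray : SameRay ℝ (q - s j) (q - s i) :=
      hray1.trans hray2 fun h => absurd h hpqne
    obtain ⟨r, hr0, hrq⟩ := hray.exists_nonneg_right hqsne
    have hc : 0 < ‖q - s i‖ := norm_pos_iff.mpr hqsne
    have hnqj : ‖q - s j‖ = r * ‖q - s i‖ := by
      rw [hrq, norm_smul, Real.norm_of_nonneg hr0]
    have hij : s i - s j = (r - 1) • (q - s i) := by
      have h1 : s i - s j = (q - s j) - (q - s i) := by abel
      rw [h1, hrq, sub_smul, one_smul]
    have hnij : ‖s i - s j‖ = |r - 1| * ‖q - s i‖ := by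
      rw [hij, norm_smul, Real.norm_eq_abs]
    have hr1 : r ≠ 1 := by
      intro h
      have h0 : s i - s j = 0 := by rw [hij, h, sub_self, zero_smul]
      exact hji (hs (sub_eq_zero.mp h0).symm)
    have heqw : r * ‖q - s i‖ + w j = ‖q - s i‖ + w i := by
      linarith [htri, hpj, hsum, hge, hnqj]
    rcases lt_or_gt_of_ne hr1 with hrlt | hrgt
    · have habs : |r - 1| = 1 - r := by rw [abs_of_neg (by linarith : r - 1 < 0)]; ring
      apply hj
      rw [hnij, habs]
      nlinarith [heqw]
    · have habs : |r - 1| = r - 1 := abs_of_pos (by linarith)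
      have hst := hstrict j hji
      rw [hnij, habs] at hst
      nlinarith [heqw]
end

section
/- Let i ≠ j be indices such that both sites s i and s j are non-degenerate. Then interior (Vor i) ∩ Vor j = ∅ and Vor i ∩ interior (Vor j) = ∅. -/
lemma vorCell_aux
    {V : Type*} [NormedAddCommGroup V] [NormedSpace ℝ V] [StrictConvexSpace ℝ V]
    {ι : Type*} (s : ι → V) (hs : Function.Injective s) (w : ι → ℝ)
    (i j : ι) (hij : i ≠ j)
    (hi : ¬ IsDegenerateSite s w i) (hj : ¬ IsDegenerateSite s w j) :
    interior (vorCell s w i) ∩ vorCell s w j = ∅ := by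
  rw [Set.eq_empty_iff_forall_notMem]
  rintro p ⟨hpI, hpj⟩
  have hpi : p ∈ vorCell s w i := interior_subset hpI
  have heq : ‖p - s i‖ + w i = ‖p - s j‖ + w j := le_antisymm (hpi j) (hpj i)
  by_cases hpsi : p = s i
  · -- then s i ∈ Vor j
    apply hi
    refine ⟨j, hij.symm, fun k => ?_⟩
    have h1 : ‖s i - s j‖ + w j = w i := by
      have := heq
      rw [hpsi] at this
      simpa using this.symm
    have h2 : w i ≤ ‖s i - s k‖ + w k := by
      have := hpi k
      rw [hpsi] at this
      simpa using this
    linarith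
  by_cases hpsj : p = s j
  · apply hj
    refine ⟨i, hij, ?_⟩
    have := hpi
    rw [hpsj] at this
    exact this
  -- main case
  have hd : (0:ℝ) < ‖p - s j‖ := by
    rw [norm_pos_iff]; exact sub_ne_zero_of_ne hpsj
  have hR : (0:ℝ) < ‖p - s i‖ := by
    rw [norm_pos_iff]; exact sub_ne_zero_of_ne hpsi
  set d := ‖p - s j‖ with hd'
  set R := ‖p - s i‖ with hR'
  obtain ⟨ε, hε, hball⟩ : ∃ ε > 0, Metric.ball p ε ⊆ vorCell s w i := by
    rcases Metric.mem_nhds_iff.mp (mem_interior_iff_mem_nhds.mp hpI) with ⟨ε, hε, h⟩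
    exact ⟨ε, hε, h⟩
  set t := min ε (min d R) / 2 with ht'
  have ht0 : 0 < t := by positivity
  have htε : t < ε := by
    have : min ε (min d R) ≤ ε := min_le_left _ _
    have h2 : 0 < min ε (min d R) := lt_min hε (lt_min hd hR)
    rw [ht']; linarith
  have htd : t < d := by
    have : min ε (min d R) ≤ d := (min_le_right _ _).trans (min_le_left _ _)
    have h2 : 0 < min ε (min d R) := lt_min hε (lt_min hd hR)
    rw [ht']; linarith
  have htR : t < R := by
    have : min ε (min d R) ≤ R := (min_le_right _ _).trans (min_le_right _ _)
    have h2 : 0 < min ε (min d R) := lt_min hε (lt_min hd hR)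
    rw [ht']; linarith
  set q := p + (t / d) • (s j - p) with hq'
  have hqp : p - q = (t / d) • (p - s j) := by
    rw [hq']; module
  have hqpnorm : ‖p - q‖ = t := by
    rw [hqp, norm_smul, Real.norm_eq_abs, abs_of_pos (by positivity), ← hd']
    field_simp
  have hqj : ‖q - s j‖ = d - t := by
    have h1 : q - s j = (1 - t / d) • (p - s j) := by rw [hq']; module
    rw [h1, norm_smul, Real.norm_eq_abs, abs_of_pos, ← hd']
    · field_simp
    · have : t / d < 1 := (div_lt_one hd).mpr htd
      linarith
  have hqmem : q ∈ vorCell s w i := by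
    apply hball
    rw [Metric.mem_ball, dist_eq_norm]
    calc ‖q - p‖ = ‖p - q‖ := by rw [norm_sub_rev]
    _ = t := hqpnorm
    _ < ε := htε
  have hqi : ‖q - s i‖ ≤ R - t := by
    have := hqmem j
    rw [hqj] at this
    linarith [heq]
  have htri : R ≤ ‖p - q‖ + ‖q - s i‖ := by
    calc R = ‖p - s i‖ := hR'
    _ = ‖(p - q) + (q - s i)‖ := by congr 1; abel
    _ ≤ _ := norm_add_le _ _
  have hqieq : ‖q - s i‖ = R - t := le_antisymm hqi (by rw [hqpnorm] at htri; linarith)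
  have hnormadd : ‖(p - q) + (q - s i)‖ = ‖p - q‖ + ‖q - s i‖ := by
    have h1 : (p - q) + (q - s i) = p - s i := by abel
    rw [h1, hqpnorm, hqieq, ← hR']; ring
  have hray : SameRay ℝ (p - q) (q - s i) := sameRay_iff_norm_add.mpr hnormadd
  have hpq0 : p - q ≠ 0 := by
    intro h
    rw [h, norm_zero] at hqpnorm
    exact ht0.ne hqpnorm
  obtain ⟨c, hc0, hc⟩ := hray.exists_nonneg_left hpq0
  -- q - s i = c • (p - q) = (c * (t/d)) • (p - s j)
  have hsi : s i - p = (t / d + c * (t / d)) • (s j - p) := by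
    have : q - s i = (c * (t / d)) • (p - s j) := by
      rw [← hc, hqp, smul_smul]
    rw [hq'] at this
    have h2 : s i = p + (t / d + c * (t / d)) • (s j - p) := by
      have := this
      rw [eq_comm, ← sub_eq_zero] at this ⊢
      rw [← neg_eq_zero, ← this]
      module
    rw [h2]; module
  set a := t / d + c * (t / d) with ha'
  have ha0 : 0 < a := by
    have h1 : 0 < t / d := by positivity
    have h2 := mul_nonneg hc0 h1.le
    rw [ha']; linarith
  have haR : a * d = R := by
    have : ‖s i - p‖ = a * d := by
      rw [hsi, norm_smul, Real.norm_eq_abs, abs_of_pos ha0, norm_sub_rev, ← hd']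
    rw [← this, norm_sub_rev, ← hR']
  have hij' : s i - s j = (a - 1) • (s j - p) := by
    have : s i - s j = (s i - p) - (s j - p) := by abel
    rw [this, hsi]; module
  have hdist : ‖s i - s j‖ = |a - 1| * d := by
    rw [hij', norm_smul, Real.norm_eq_abs, norm_sub_rev, ← hd']
  rcases lt_trichotomy R d with hRd | hRd | hRd
  · -- s i between p and s j : s i ∈ vorCell s w j
    have ha1 : a < 1 := by
      rw [← haR] at hRd
      by_contra h
      push_neg at h
      nlinarith
    have hij2 : ‖s i - s j‖ = d - R := by
      rw [hdist, abs_of_neg (by linarith), ← haR]; ring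
    apply hi
    refine ⟨j, hij.symm, fun k => ?_⟩
    have h2 : R + w i ≤ ‖p - s k‖ + w k := hpi k
    have h3 : ‖p - s k‖ ≤ R + ‖s i - s k‖ := by
      calc ‖p - s k‖ = ‖(p - s i) + (s i - s k)‖ := by congr 1; abel
      _ ≤ ‖p - s i‖ + ‖s i - s k‖ := norm_add_le _ _
      _ = R + ‖s i - s k‖ := by rw [← hR']
    rw [hij2]
    linarith [heq]
  · -- s i = s j
    exact hij (hs (by
      have had : a * d = 1 * d := by rw [haR, hRd, one_mul]
      have ha1 : a = 1 := mul_right_cancel₀ hd.ne' had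
      have h0 : s i - s j = 0 := by rw [hij', ha1]; simp
      exact sub_eq_zero.mp h0))
  · -- s j between p and s i : s j ∈ vorCell s w i
    have ha1 : 1 < a := by
      rw [← haR] at hRd
      by_contra h
      push_neg at h
      nlinarith
    have hij2 : ‖s j - s i‖ = R - d := by
      rw [norm_sub_rev, hdist, abs_of_pos (by linarith), ← haR]; ring
    apply hj
    refine ⟨i, hij, fun k => ?_⟩
    have h2 : R + w i ≤ ‖p - s k‖ + w k := hpi k
    have h3 : ‖p - s k‖ ≤ d + ‖s j - s k‖ := by
      calc ‖p - s k‖ = ‖(p - s j) + (s j - s k)‖ := by congr 1; abel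
      _ ≤ ‖p - s j‖ + ‖s j - s k‖ := norm_add_le _ _
      _ = d + ‖s j - s k‖ := by rw [← hd']
    rw [hij2]
    linarith

/-- The cells of two distinct non-degenerate sites have no point of one in the
interior of the other. -/
theorem vorCell_nondegenerate_interiors_disjoint
    {V : Type*} [NormedAddCommGroup V] [NormedSpace ℝ V]
    (hdim : Module.finrank ℝ V = 2) [StrictConvexSpace ℝ V]
    {ι : Type*} [Finite ι]
    (s : ι → V) (hs : Function.Injective s) (w : ι → ℝ)
    (i j : ι) (hij : i ≠ j)
    (hi : ¬ IsDegenerateSite s w i) (hj : ¬ IsDegenerateSite s w j) :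
    interior (vorCell s w i) ∩ vorCell s w j = ∅ ∧
      vorCell s w i ∩ interior (vorCell s w j) = ∅ := by
  constructor
  · exact vorCell_aux s hs w i j hij hi hj
  · rw [Set.inter_comm]
    exact vorCell_aux s hs w j i hij.symm hj hi
end

section
/- Let i ≠ j be indices such that both sites s i and s j are non-degenerate, and let p ∈ Vor i and q ∈ Vor j be distinct points. Then the closed segments segment ℝ p (s i) and segment ℝ q (s j) are disjoint. -/
set_option maxHeartbeats 1000000


/-- A non-degenerate site is strictly closer (in the weighted sense) to itself
than to any other site. -/
lemma nondegenerate_strict {V : Type*} [NormedAddCommGroup V] {ι : Type*} [Finite ι]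
    (s : ι → V) (w : ι → ℝ) (i : ι) (hi : ¬ IsDegenerateSite s w i) :
    ∀ k, k ≠ i → w i < ‖s i - s k‖ + w k := by
  intro k hk
  by_contra h
  push_neg at h
  have : Nonempty ι := ⟨i⟩
  obtain ⟨m, hm⟩ := Finite.exists_min (fun l => ‖s i - s l‖ + w l)
  rcases eq_or_ne m i with rfl | hmi
  · refine hi ⟨k, hk, fun l => ?_⟩
    have h1 := hm l
    have h2 := hm k
    simp only [sub_self, norm_zero, zero_add] at h1 h2
    linarith
  · exact hi ⟨m, hmi, fun l => hm l⟩

/-- For distinct non-degenerate sites `s i`, `s j` and distinct points `p ∈ Vor i`,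
`q ∈ Vor j`, the segments `p s i` and `q s j` are disjoint. -/
theorem vorCell_segments_disjoint
    {V : Type*} [NormedAddCommGroup V] [NormedSpace ℝ V]
    (hdim : Module.finrank ℝ V = 2) [StrictConvexSpace ℝ V]
    {ι : Type*} [Finite ι]
    (s : ι → V) (hs : Function.Injective s) (w : ι → ℝ)
    (i j : ι) (hij : i ≠ j)
    (hi : ¬ IsDegenerateSite s w i) (hj : ¬ IsDegenerateSite s w j)
    (p q : V) (hp : p ∈ vorCell s w i) (hq : q ∈ vorCell s w j) (hpq : p ≠ q) :
    Disjoint (segment ℝ p (s i)) (segment ℝ q (s j)) := by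
  rw [Set.disjoint_left]
  intro x hxp hxq
  have A1 : dist p x + dist x (s i) = dist p (s i) := dist_add_dist_of_mem_segment hxp
  have A2 : dist q x + dist x (s j) = dist q (s j) := dist_add_dist_of_mem_segment hxq
  have hpi := hp j
  have hqj := hq i
  have t1 : dist p (s j) ≤ dist p x + dist x (s j) := dist_triangle _ _ _
  have t2 : dist q (s i) ≤ dist q x + dist x (s i) := dist_triangle _ _ _
  simp only [dist_eq_norm] at A1 A2 t1 t2
  -- all the triangle inequalities are equalities
  have E1 : ‖x - s i‖ + w i = ‖x - s j‖ + w j := by linarith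
  have E2 : ‖p - x‖ + ‖x - s j‖ = ‖p - s j‖ := by linarith
  have E3 : ‖q - x‖ + ‖x - s i‖ = ‖q - s i‖ := by linarith
  -- hence `x` also lies on the segments `[p, s j]` and `[q, s i]`
  have hxpj : x ∈ segment ℝ p (s j) := by
    rw [mem_segment_iff_sameRay, sameRay_iff_norm_add, sub_add_sub_cancel',
      norm_sub_rev (s j) p, norm_sub_rev x p, norm_sub_rev (s j) x]
    linarith
  have hxqi : x ∈ segment ℝ q (s i) := by
    rw [mem_segment_iff_sameRay, sameRay_iff_norm_add, sub_add_sub_cancel',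
      norm_sub_rev (s i) q, norm_sub_rev x q, norm_sub_rev (s i) x]
    linarith
  -- `s i - x` and `s j - x` lie on a common ray
  have key : SameRay ℝ (s i - x) (s j - x) := by
    rcases eq_or_ne x p with rfl | hne
    · have r1 : SameRay ℝ (x - q) (s i - x) := mem_segment_iff_sameRay.mp hxqi
      have r2 : SameRay ℝ (x - q) (s j - x) := mem_segment_iff_sameRay.mp hxq
      exact r1.symm.trans r2 fun h => absurd h (sub_ne_zero_of_ne hpq)
    · have r1 : SameRay ℝ (x - p) (s i - x) := mem_segment_iff_sameRay.mp hxp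
      have r2 : SameRay ℝ (x - p) (s j - x) := mem_segment_iff_sameRay.mp hxpj
      exact r1.symm.trans r2 fun h => absurd h (sub_ne_zero_of_ne hne)
  have hnorm : ‖s i - s j‖ = |‖x - s i‖ - ‖x - s j‖| := by
    have := key.norm_sub
    rwa [sub_sub_sub_cancel_right, norm_sub_rev (s i) x, norm_sub_rev (s j) x] at this
  have hi' : w i < ‖s i - s j‖ + w j := nondegenerate_strict s w i hi j (Ne.symm hij)
  have hj' : w j < ‖s j - s i‖ + w i := nondegenerate_strict s w j hj i hij
  rw [norm_sub_rev] at hj'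
  rcases abs_cases (‖x - s i‖ - ‖x - s j‖) with ⟨h1, _⟩ | ⟨h1, _⟩ <;> linarith
end

section
/- (Equality case of the Lipschitz property in strictly convex spaces.) Let V be a normed real vector space that is a strictly convex space (StrictConvexSpace ℝ V), let γ : ℝ → V be continuous on Set.Icc 0 1 with finite total variation ℓ = eVariationOn γ (Set.Icc 0 1), and let p ∈ V. If ‖p − γ 0‖ − ‖p − γ 1‖ = ℓ.toReal, then the image γ '' (Set.Icc 0 1) is contained in the closed segment segment ℝ (γ 0) p; in particular γ 1 lies on the segment from γ 0 to p and p, γ 0, γ 1 are collinear. -/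
/-- Equality case of the Lipschitz property of distances in strictly convex spaces:
if a curve `γ` on `[0,1]` of finite length `ℓ` satisfies
`‖p - γ 0‖ - ‖p - γ 1‖ = ℓ`, then the curve traces a subset of the segment from
`γ 0` to `p`; in particular `γ 1` lies on this segment and `p`, `γ 0`, `γ 1` are
collinear. -/
theorem eVariationOn_eq_dist_sub_dist_collinear
    {V : Type*} [NormedAddCommGroup V] [NormedSpace ℝ V] [StrictConvexSpace ℝ V]
    (γ : ℝ → V) (hcont : ContinuousOn γ (Set.Icc 0 1))
    (hfin : eVariationOn γ (Set.Icc 0 1) ≠ ⊤) (p : V)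
    (heq : ‖p - γ 0‖ - ‖p - γ 1‖ = (eVariationOn γ (Set.Icc 0 1)).toReal) :
    γ '' Set.Icc 0 1 ⊆ segment ℝ (γ 0) p ∧
      γ 1 ∈ segment ℝ (γ 0) p ∧
      Collinear ℝ ({p, γ 0, γ 1} : Set V) := by
  have key : ∀ t ∈ Set.Icc (0:ℝ) 1, Wbtw ℝ (γ 0) (γ t) p := by
    intro t ht
    obtain ⟨ht0, ht1⟩ := ht
    have hA : eVariationOn γ (Set.Icc 0 t) ≠ ⊤ :=
      fun h => hfin (top_le_iff.mp (h ▸ eVariationOn.mono γ (Set.Icc_subset_Icc le_rfl ht1)))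
    have hB : eVariationOn γ (Set.Icc t 1) ≠ ⊤ :=
      fun h => hfin (top_le_iff.mp (h ▸ eVariationOn.mono γ (Set.Icc_subset_Icc ht0 le_rfl)))
    have hsplit := eVariationOn.Icc_add_Icc γ (s := Set.Icc (0:ℝ) 1) ht0 ht1 ⟨ht0, ht1⟩
    rw [Set.Icc_inter_Icc, Set.Icc_inter_Icc, Set.Icc_inter_Icc] at hsplit
    simp only [max_self, min_self, sup_of_le_right ht0, inf_of_le_left ht1,
      sup_of_le_left ht0, inf_of_le_right ht1] at hsplit
    have hsum : (eVariationOn γ (Set.Icc 0 t)).toReal + (eVariationOn γ (Set.Icc t 1)).toReal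
        = (eVariationOn γ (Set.Icc 0 1)).toReal := by
      rw [← ENNReal.toReal_add hA hB, hsplit]
    have hd1 : dist (γ 0) (γ t) ≤ (eVariationOn γ (Set.Icc 0 t)).toReal := by
      have := eVariationOn.edist_le γ (s := Set.Icc (0:ℝ) t)
        ⟨le_rfl, ht0⟩ ⟨ht0, le_rfl⟩
      rw [edist_dist] at this
      exact (ENNReal.ofReal_le_iff_le_toReal hA).mp this
    have hd2 : dist (γ t) (γ 1) ≤ (eVariationOn γ (Set.Icc t 1)).toReal := by
      have := eVariationOn.edist_le γ (s := Set.Icc t (1:ℝ))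
        ⟨le_rfl, ht1⟩ ⟨ht1, le_rfl⟩
      rw [edist_dist] at this
      exact (ENNReal.ofReal_le_iff_le_toReal hB).mp this
    have h1 : dist (γ 0) (γ t) + dist (γ t) p = dist (γ 0) p := by
      have t1 : dist (γ 0) p ≤ dist (γ 0) (γ t) + dist (γ t) p := dist_triangle _ _ _
      have t2 : dist (γ t) p ≤ dist (γ t) (γ 1) + dist (γ 1) p := dist_triangle _ _ _
      have e1 : dist (γ 0) p = ‖p - γ 0‖ := by rw [dist_comm, dist_eq_norm]
      have e2 : dist (γ 1) p = ‖p - γ 1‖ := by rw [dist_comm, dist_eq_norm]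
      linarith
    exact dist_add_dist_eq_iff.mp h1
  have hseg : ∀ t ∈ Set.Icc (0:ℝ) 1, γ t ∈ segment ℝ (γ 0) p := fun t ht =>
    mem_segment_iff_wbtw.mpr (key t ht)
  refine ⟨?_, hseg 1 ⟨zero_le_one, le_rfl⟩, ?_⟩
  · rintro x ⟨t, ht, rfl⟩
    exact hseg t ht
  · have h := (key 1 ⟨zero_le_one, le_rfl⟩).collinear
    have : ({p, γ 0, γ 1} : Set V) = {γ 0, γ 1, p} := by
      ext x; simp only [Set.mem_insert_iff, Set.mem_singleton_iff]; tauto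
    rw [this]
    exact h
end

section
/- (Uniqueness of shortest curves for strictly convex distance functions.) Let V be a normed real vector space that is a strictly convex space (StrictConvexSpace ℝ V), let p, q ∈ V, and let γ : ℝ → V be continuous on Set.Icc 0 1 with γ 0 = p, γ 1 = q, and total variation eVariationOn γ (Set.Icc 0 1) = ENNReal.ofReal ‖p − q‖. Then the image γ '' (Set.Icc 0 1) equals the closed segment segment ℝ p q. -/
/-!
Splitting the variation at any `t` shows `‖p - γ t‖ + ‖γ t - q‖ ≤ ‖p - q‖`, so by strict
convexity every `γ t` lies on the segment. Conversely the image is connected and contains both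
endpoints; since a point of the segment is determined by its distance to `p`, the intermediate
value theorem for `dist p` on the image shows that the whole segment is covered.
-/

open Set AffineMap

theorem edist_add_edist_le_eVariationOn {α E : Type*} [LinearOrder α] [PseudoEMetricSpace E]
    (f : α → E) {a t b : α} (hat : a ≤ t) (htb : t ≤ b) :
    edist (f a) (f t) + edist (f t) (f b) ≤ eVariationOn f (Icc a b) := by
  have hsplit := eVariationOn.Icc_add_Icc f hat htb (mem_univ t)
  simp only [univ_inter] at hsplit
  rw [← hsplit]
  exact add_le_add
    (eVariationOn.edist_le f (left_mem_Icc.2 hat) (right_mem_Icc.2 hat))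
    (eVariationOn.edist_le f (left_mem_Icc.2 htb) (right_mem_Icc.2 htb))

theorem image_subset_segment_of_eVariationOn_eq_edist {V : Type*} [NormedAddCommGroup V]
    [NormedSpace ℝ V] [StrictConvexSpace ℝ V] {γ : ℝ → V} {a b : ℝ}
    (hlen : eVariationOn γ (Icc a b) = edist (γ a) (γ b)) :
    γ '' Icc a b ⊆ segment ℝ (γ a) (γ b) := by
  rintro _ ⟨t, ⟨hat, htb⟩, rfl⟩
  have hle : dist (γ a) (γ t) + dist (γ t) (γ b) ≤ dist (γ a) (γ b) := by
    have := hlen ▸ edist_add_edist_le_eVariationOn γ hat htb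
    rwa [edist_dist, edist_dist, edist_dist, ← ENNReal.ofReal_add dist_nonneg dist_nonneg,
      ENNReal.ofReal_le_ofReal_iff dist_nonneg] at this
  exact mem_segment_iff_wbtw.2 <| dist_add_dist_eq_iff.1 <|
    le_antisymm hle (dist_triangle _ _ _)

theorem IsPreconnected.segment_subset {V : Type*} [NormedAddCommGroup V] [NormedSpace ℝ V]
    {p q : V} {s : Set V} (hs : IsPreconnected s) (hp : p ∈ s) (hq : q ∈ s)
    (hsub : s ⊆ segment ℝ p q) : segment ℝ p q ⊆ s := by
  rcases eq_or_ne p q with rfl | hpq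
  · simpa [segment_same] using hp
  rw [segment_eq_image_lineMap]
  rintro _ ⟨t, ⟨ht0, ht1⟩, rfl⟩
  have hdist : dist p (lineMap p q t) ∈ dist p '' s := by
    refine (hs.image _ (continuous_const.dist continuous_id).continuousOn).Icc_subset
      ⟨p, hp, dist_self p⟩ ⟨q, hq, rfl⟩ ⟨dist_nonneg, ?_⟩
    rw [dist_left_lineMap, Real.norm_of_nonneg ht0]
    exact mul_le_of_le_one_left dist_nonneg ht1
  obtain ⟨y, hys, hy⟩ := hdist
  obtain ⟨u, ⟨hu0, -⟩, rfl⟩ := segment_eq_image_lineMap ℝ p q ▸ hsub hys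
  rw [dist_left_lineMap, dist_left_lineMap, mul_left_inj' (dist_ne_zero.2 hpq),
    Real.norm_of_nonneg hu0, Real.norm_of_nonneg ht0] at hy
  rwa [← hy]

/-- Uniqueness of shortest curves for strictly convex distance functions:
a curve from `p` to `q` whose length (total variation on `[0,1]`) equals `‖p - q‖`
traces out exactly the line segment from `p` to `q`. -/
theorem shortest_curve_eq_segment
    {V : Type*} [NormedAddCommGroup V] [NormedSpace ℝ V] [StrictConvexSpace ℝ V]
    (p q : V) (γ : ℝ → V) (hcont : ContinuousOn γ (Set.Icc 0 1))
    (h0 : γ 0 = p) (h1 : γ 1 = q)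
    (hlen : eVariationOn γ (Set.Icc 0 1) = ENNReal.ofReal ‖p - q‖) :
    γ '' Set.Icc 0 1 = segment ℝ p q := by
  subst h0 h1
  rw [← dist_eq_norm, ← edist_dist] at hlen
  have hsub := image_subset_segment_of_eVariationOn_eq_edist hlen
  exact hsub.antisymm <| (isPreconnected_Icc.image γ hcont).segment_subset
    (mem_image_of_mem γ (left_mem_Icc.2 zero_le_one))
    (mem_image_of_mem γ (right_mem_Icc.2 zero_le_one)) hsub
end

section
/- Let V be a normed real vector space with Module.finrank ℝ V = 2 which is NOT a strictly convex space (¬ StrictConvexSpace ℝ V, equivalently the unit sphere of V contains a nondegenerate line segment). Then there exists an infinite set S ⊆ V that is not collinear (¬ Collinear ℝ S) such that for all p, q ∈ S there exists n : ℕ with ‖p − q‖ = n. -/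
lemma key_norm {V : Type*} [NormedAddCommGroup V] [NormedSpace ℝ V] {a b : V}
    (ha : ‖a‖ = 1) (hb : ‖b‖ = 1) (hab : ‖a + b‖ = 2) {s t : ℝ}
    (hs : 0 ≤ s) (ht : 0 ≤ t) : ‖s • a + t • b‖ = s + t := by
  have h1 : ‖s • a + t • b‖ ≤ s + t := by
    calc ‖s • a + t • b‖ ≤ ‖s • a‖ + ‖t • b‖ := norm_add_le _ _
    _ = s + t := by rw [norm_smul, norm_smul, ha, hb, Real.norm_eq_abs,
        Real.norm_eq_abs, abs_of_nonneg hs, abs_of_nonneg ht]; ring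
  have h2 : ‖t • a + s • b‖ ≤ t + s := by
    calc ‖t • a + s • b‖ ≤ ‖t • a‖ + ‖s • b‖ := norm_add_le _ _
    _ = t + s := by rw [norm_smul, norm_smul, ha, hb, Real.norm_eq_abs,
        Real.norm_eq_abs, abs_of_nonneg hs, abs_of_nonneg ht]; ring
  have hsplit : (s + t) • (a + b) = (s • a + t • b) + (t • a + s • b) := by module
  have h3 : ‖(s + t) • (a + b)‖ = 2 * (s + t) := by
    rw [norm_smul, hab, Real.norm_eq_abs, abs_of_nonneg (by linarith)]; ring
  have h4 : ‖(s + t) • (a + b)‖ ≤ ‖s • a + t • b‖ + ‖t • a + s • b‖ := by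
    rw [hsplit]; exact norm_add_le _ _
  linarith

/-- For any 2-dimensional normed space that is not strictly convex, there is an
infinite non-collinear set all of whose pairwise distances are integers. -/
theorem exists_infinite_noncollinear_integer_distance_set_of_not_strictConvex
    {V : Type*} [NormedAddCommGroup V] [NormedSpace ℝ V]
    (hdim : Module.finrank ℝ V = 2) (hnsc : ¬ StrictConvexSpace ℝ V) :
    ∃ S : Set V, S.Infinite ∧ ¬ Collinear ℝ S ∧
      ∀ p ∈ S, ∀ q ∈ S, ∃ n : ℕ, ‖p - q‖ = n := by
  -- obtain witnesses of non-strict-convexity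
  obtain ⟨a, b, ha, hb, hab2, hnr⟩ :
      ∃ a b : V, ‖a‖ = 1 ∧ ‖b‖ = 1 ∧ ‖a + b‖ = 2 ∧ ¬ SameRay ℝ a b := by
    by_contra h
    push_neg at h
    exact hnsc (StrictConvexSpace.of_norm_add h)
  have hne : a ≠ b := fun h => hnr (h ▸ SameRay.refl a)
  have habne : a + b ≠ 0 := by
    intro h
    rw [h, norm_zero] at hab2; norm_num at hab2
  -- key combination norm fact
  have key : ∀ s t : ℝ, 0 ≤ s → 0 ≤ t → ‖s • a + t • b‖ = s + t :=
    fun s t hs ht => key_norm ha hb hab2 hs ht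
  refine ⟨Set.range (fun n : ℕ => (n : ℝ) • (a + b)) ∪ {a}, ?_, ?_, ?_⟩
  · apply Set.Infinite.mono Set.subset_union_left
    apply Set.infinite_range_of_injective
    intro m n h
    simp only at h
    have h2 : ((m : ℝ) - n) • (a + b) = 0 := by rw [sub_smul, h]; simp
    rcases smul_eq_zero.1 h2 with h3 | h3
    · exact_mod_cast sub_eq_zero.1 h3
    · exact absurd h3 habne
  · intro hcol
    have h0 : (0:V) ∈ Set.range (fun n : ℕ => (n : ℝ) • (a + b)) ∪ {a} :=
      Or.inl ⟨0, by simp⟩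
    rw [collinear_iff_of_mem h0] at hcol
    obtain ⟨v, hv⟩ := hcol
    obtain ⟨c, hc⟩ := hv (a + b) (Or.inl ⟨1, by simp⟩)
    obtain ⟨d, hd⟩ := hv a (Or.inr rfl)
    simp only [vadd_eq_add, add_zero] at hc hd
    have hbv : b = (c - d) • v := by rw [sub_smul, ← hc, ← hd]; abel
    have e1 : |d| * ‖v‖ = 1 := by rw [hd, norm_smul, Real.norm_eq_abs] at ha; exact ha
    have e2 : |c - d| * ‖v‖ = 1 := by
      rw [hbv, norm_smul, Real.norm_eq_abs] at hb; exact hb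
    have e3 : |c| * ‖v‖ = 2 := by rw [hc, norm_smul, Real.norm_eq_abs] at hab2; exact hab2
    have hvpos : 0 < ‖v‖ := by
      rcases lt_or_eq_of_le (norm_nonneg v) with h | h
      · exact h
      · rw [← h] at e1; simp at e1
    have hdd : |c - d| = |d| := by
      have := mul_right_cancel₀ (ne_of_gt hvpos) (e2.trans e1.symm); exact this
    rcases abs_eq_abs.1 hdd with h | h
    · -- c = 2d, so b = d • v = a
      have : b = a := by rw [hbv, hd, show c - d = d by linarith]
      exact hne this.symm
    · -- c = 0
      have hc0 : c = 0 := by linarith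
      rw [hc0] at e3; simp at e3
  · have hdista : ∀ m : ℕ, ∃ n : ℕ, ‖(m : ℝ) • (a + b) - a‖ = n := by
      intro m
      rcases Nat.eq_zero_or_pos m with h | h
      · refine ⟨1, ?_⟩
        simp [h, ha]
      · refine ⟨2 * m - 1, ?_⟩
        have hrw : (m : ℝ) • (a + b) - a = ((m : ℝ) - 1) • a + (m : ℝ) • b := by module
        have h1 : (1:ℝ) ≤ (m:ℝ) := by exact_mod_cast h
        rw [hrw, key _ _ (by linarith) (by linarith)]
        have : (1:ℕ) ≤ 2 * m := by omega
        push_cast [Nat.cast_sub this]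
        ring
    have hrange : ∀ m k : ℕ, ∃ n : ℕ, ‖(m : ℝ) • (a + b) - (k : ℝ) • (a + b)‖ = n := by
      intro m k
      refine ⟨2 * ((m : ℤ) - k).natAbs, ?_⟩
      have hrw : (m : ℝ) • (a + b) - (k : ℝ) • (a + b) = ((m : ℝ) - k) • (a + b) := by module
      rw [hrw, norm_smul, hab2, Real.norm_eq_abs]
      have : |(m : ℝ) - k| = (((m : ℤ) - k).natAbs : ℝ) := by
        rw [Nat.cast_natAbs]; push_cast; ring_nf
      rw [this]; push_cast; ring
    rintro p (⟨m, rfl⟩ | rfl) q (⟨k, rfl⟩ | rfl)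
    · exact hrange m k
    · exact hdista m
    · obtain ⟨n, hn⟩ := hdista k
      exact ⟨n, by rw [norm_sub_rev]; exact hn⟩
    · exact ⟨0, by simp⟩
end
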